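/- Suppose: f : ℂⁿ → ℝ is convex and Fréchet differentiable with ∇f Lipschitz continuous with constant L > 0; λ > 0; 0 < α ≤ 1/L; β = αλ; I + βW is positive semidefinite with spectral norm σ > 0; and 0 < η ≤ 2/σ. Fix x^k ∈ ℂⁿ, set z = x^k − α∇f(x^k), define S : ℝⁿ → ℝⁿ₊ by S(x) = P₊(x − η[(I + βW)x + β𝟙 − |z|]), and let u ∈ ℂⁿ be the phase vector with uᵢ = zᵢ/|zᵢ| if zᵢ ≠ 0 and uᵢ = 1 otherwise. Then for every integer m ≥ 1, with C(x) = f(x) + λ·P_W(x), one has C(S^m(|x^k|) ⊙ u) ≤ C(x^k), where ⊙ denotes componentwise product and S^m denotes S iterated m times. -/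

import Mathlib

/-!
The composite `C` is majorised at `xᵏ` by the proximal-gradient surrogate
`M y = f xᵏ - α/2 ‖∇f xᵏ‖² + ‖y - z‖²/(2α) + λ P_W(y)` (descent lemma, using `α L ≤ 1`), and
`M xᵏ = C xᵏ`. On vectors `y = r ⊙ u` with `r ≥ 0` the surrogate equals, up to a constant, `q r / α`
for the quadratic `q r = ½ rᵀ(I + βW) r + (β𝟙 - |z|)ᵀ r`, and `S` is projected gradient descent for
`q` with step `η ≤ 2/‖I + βW‖`, which never increases `q`. Finally, aligning the phases with those
of `z` only decreases the surrogate: `M (|xᵏ| ⊙ u) ≤ M xᵏ` because `∑ (|xᵢ| - |zᵢ|)² ≤ ‖x - z‖²`.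
-/

open Matrix
open scoped RealInnerProductSpace

section DescentLemma

variable {E : Type*} [NormedAddCommGroup E] [InnerProductSpace ℝ E] [CompleteSpace E]
  {f : E → ℝ} {f' : E → E} {L : ℝ}

theorem le_add_inner_add_sq_of_lipschitz_gradient (hf : ∀ x, HasGradientAt f (f' x) x)
    (hlip : ∀ x y, ‖f' x - f' y‖ ≤ L * ‖x - y‖) (x y : E) :
    f y ≤ f x + ⟪f' x, y - x⟫ + L / 2 * ‖y - x‖ ^ 2 := by
  set v := y - x
  -- `ψ` is antitone on `[0, 1]`: its derivative is `⟪f' (x + t • v) - f' x, v⟫ - L t ‖v‖² ≤ 0`.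
  set ψ : ℝ → ℝ := fun t => f (x + t • v) - t * ⟪f' x, v⟫ - L * ‖v‖ ^ 2 * t ^ 2 / 2
  have hψ : ∀ t, HasDerivAt ψ (⟪f' (x + t • v) - f' x, v⟫ - L * ‖v‖ ^ 2 * t) t := by
    intro t
    have hline : HasDerivAt (fun t : ℝ => x + t • v) v t := by
      simpa using ((hasDerivAt_id t).smul_const v).const_add x
    have hfline := (hf (x + t • v)).hasFDerivAt.comp_hasDerivAt t hline
    refine ((hfline.sub ((hasDerivAt_id t).mul_const ⟪f' x, v⟫)).sub
      (((hasDerivAt_pow 2 t).const_mul (L * ‖v‖ ^ 2)).div_const 2)).congr_deriv ?_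
    simp only [InnerProductSpace.toDual_apply_apply, inner_sub_left]
    ring
  have hanti : AntitoneOn ψ (Set.Icc 0 1) := by
    refine antitoneOn_of_hasDerivWithinAt_nonpos (convex_Icc 0 1)
      (fun t _ => (hψ t).continuousAt.continuousWithinAt)
      (fun t _ => (hψ t).hasDerivWithinAt) fun t ht => ?_
    rw [interior_Icc] at ht
    calc ⟪f' (x + t • v) - f' x, v⟫ - L * ‖v‖ ^ 2 * t
        ≤ ‖f' (x + t • v) - f' x‖ * ‖v‖ - L * ‖v‖ ^ 2 * t := by
          gcongr; exact real_inner_le_norm _ _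
      _ ≤ L * ‖t • v‖ * ‖v‖ - L * ‖v‖ ^ 2 * t := by
          gcongr; simpa using hlip (x + t • v) x
      _ = 0 := by rw [norm_smul, Real.norm_of_nonneg ht.1.le]; ring
  have h := hanti (by simp) (by simp) zero_le_one
  simp only [ψ, v, one_smul, add_sub_cancel, zero_smul, add_zero] at h
  linarith

theorem le_sub_add_norm_sub_gradient_step_sq (hf : ∀ x, HasGradientAt f (f' x) x)
    (hlip : ∀ x y, ‖f' x - f' y‖ ≤ L * ‖x - y‖) {α : ℝ} (hα : 0 < α) (hαL : α * L ≤ 1)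
    (x y : E) :
    f y ≤ f x - α / 2 * ‖f' x‖ ^ 2 + 1 / (2 * α) * ‖y - (x - α • f' x)‖ ^ 2 := by
  have hdesc := le_add_inner_add_sq_of_lipschitz_gradient hf hlip x y
  have hLα : L / 2 ≤ 1 / (2 * α) := by
    rw [div_le_div_iff₀ two_pos (by positivity)]; linarith
  have hexpand : 1 / (2 * α) * ‖y - (x - α • f' x)‖ ^ 2
      = 1 / (2 * α) * ‖y - x‖ ^ 2 + ⟪f' x, y - x⟫ + α / 2 * ‖f' x‖ ^ 2 := by
    rw [show y - (x - α • f' x) = (y - x) + α • f' x by abel, norm_add_sq_real,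
      real_inner_smul_right, real_inner_comm, norm_smul, Real.norm_of_nonneg hα.le]
    field_simp
  have hsq : L / 2 * ‖y - x‖ ^ 2 ≤ 1 / (2 * α) * ‖y - x‖ ^ 2 := by gcongr
  linarith

end DescentLemma

section ProjectedGradient

variable {ι : Type*} [Fintype ι]

noncomputable def quadObj (A : Matrix ι ι ℝ) (c r : ι → ℝ) : ℝ := 1 / 2 * (r ⬝ᵥ A *ᵥ r) + c ⬝ᵥ r

noncomputable def projGradStep (A : Matrix ι ι ℝ) (c : ι → ℝ) (η : ℝ) (r : ι → ℝ) : ι → ℝ :=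
  fun i => max (r i - η * ((A *ᵥ r) i + c i)) 0

theorem quadObj_add {A : Matrix ι ι ℝ} (hA : A.IsSymm) (c r v : ι → ℝ) :
    quadObj A c (r + v) = quadObj A c r + (A *ᵥ r + c) ⬝ᵥ v + 1 / 2 * (v ⬝ᵥ A *ᵥ v) := by
  have hswap : r ⬝ᵥ A *ᵥ v = A *ᵥ r ⬝ᵥ v := by
    rw [dotProduct_mulVec, ← mulVec_transpose, hA.eq, dotProduct_comm]
  simp only [quadObj, mulVec_add, dotProduct_add, add_dotProduct, hswap,
    dotProduct_comm v (A *ᵥ r)]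
  ring

theorem dotProduct_mulVec_le_opNorm [DecidableEq ι] (A : Matrix ι ι ℝ) (v : ι → ℝ) :
    v ⬝ᵥ A *ᵥ v ≤ ‖toEuclideanCLM (𝕜 := ℝ) A‖ * (v ⬝ᵥ v) := by
  set w : EuclideanSpace ℝ ι := WithLp.toLp 2 v
  have hnorm : v ⬝ᵥ v = ‖w‖ ^ 2 := by
    rw [EuclideanSpace.real_norm_sq_eq]
    simp [w, dotProduct, sq]
  calc v ⬝ᵥ A *ᵥ v = ⟪w, toEuclideanCLM (𝕜 := ℝ) A w⟫ := (inner_toEuclideanCLM A w w).symm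
    _ ≤ ‖w‖ * (‖toEuclideanCLM (𝕜 := ℝ) A‖ * ‖w‖) :=
        (real_inner_le_norm _ _).trans (by gcongr; exact ContinuousLinearMap.le_opNorm _ _)
    _ = ‖toEuclideanCLM (𝕜 := ℝ) A‖ * (v ⬝ᵥ v) := by rw [hnorm]; ring

theorem max_sub_sub_mul_nonpos {r : ℝ} (hr : 0 ≤ r) (t : ℝ) :
    (max (r - t) 0 - r) * (max (r - t) 0 - r + t) ≤ 0 := by
  rcases le_total 0 (r - t) with h | h
  · simp [max_eq_left h]
  · rw [max_eq_right h]
    nlinarith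

theorem quadObj_projGradStep_le [DecidableEq ι] {A : Matrix ι ι ℝ} (hA : A.IsSymm) (c : ι → ℝ)
    {η : ℝ} (hη : 0 < η) (hAη : ‖toEuclideanCLM (𝕜 := ℝ) A‖ * η ≤ 2)
    {r : ι → ℝ} (hr : 0 ≤ r) :
    quadObj A c (projGradStep A c η r) ≤ quadObj A c r := by
  set d := A *ᵥ r + c
  set v := projGradStep A c η r - r
  have hvv : 0 ≤ v ⬝ᵥ v := Finset.sum_nonneg fun i _ => mul_self_nonneg (v i)
  -- the step is a projection, so it makes an obtuse angle with the gradient `d`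
  have hobtuse : η * (d ⬝ᵥ v) + v ⬝ᵥ v ≤ 0 := by
    simp only [dotProduct, Finset.mul_sum, ← Finset.sum_add_distrib]
    refine Finset.sum_nonpos fun i _ => ?_
    have := max_sub_sub_mul_nonpos (hr i) (η * d i)
    simp only [v, d, Pi.sub_apply, Pi.add_apply, projGradStep] at this ⊢
    linarith
  have hquad := dotProduct_mulVec_le_opNorm A v
  rw [show projGradStep A c η r = r + v from (add_sub_cancel r _).symm, quadObj_add hA]
  nlinarith [mul_le_mul_of_nonneg_right hAη hvv]

theorem quadObj_iterate_projGradStep_le [DecidableEq ι] {A : Matrix ι ι ℝ} (hA : A.IsSymm)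
    (c : ι → ℝ) {η : ℝ} (hη : 0 < η) (hAη : ‖toEuclideanCLM (𝕜 := ℝ) A‖ * η ≤ 2)
    {r : ι → ℝ} (hr : 0 ≤ r) (m : ℕ) :
    0 ≤ (projGradStep A c η)^[m] r ∧ quadObj A c ((projGradStep A c η)^[m] r) ≤ quadObj A c r := by
  induction m with
  | zero => exact ⟨hr, le_rfl⟩
  | succ m ih =>
    rw [Function.iterate_succ_apply']
    exact ⟨fun i => le_max_right _ _, (quadObj_projGradStep_le hA c hη hAη ih.1).trans ih.2⟩

end ProjectedGradient

section Penalty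

variable {ι : Type*} [Fintype ι]

noncomputable def penalty (W : Matrix ι ι ℝ) (r : ι → ℝ) : ℝ := ∑ i, r i + 1 / 2 * (r ⬝ᵥ W *ᵥ r)

theorem dotProduct_mulVec_eq_sum_sum {R : Type*} [CommSemiring R] (W : Matrix ι ι R)
    (v w : ι → R) : v ⬝ᵥ W *ᵥ w = ∑ i, ∑ j, W i j * (v i * w j) := by
  simp only [dotProduct, mulVec, Finset.mul_sum]
  exact Finset.sum_congr rfl fun i _ => Finset.sum_congr rfl fun j _ => by ring

theorem sum_sq_sub_add_penalty_eq_quadObj [DecidableEq ι] (W : Matrix ι ι ℝ) (b r : ι → ℝ)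
    {α : ℝ} (hα : α ≠ 0) (lam : ℝ) :
    1 / (2 * α) * ∑ i, (r i - b i) ^ 2 + lam * penalty W r
      = quadObj (1 + (α * lam) • W) (fun i => α * lam - b i) r / α
        + 1 / (2 * α) * ∑ i, b i ^ 2 := by
  have hsq : ∑ i, (r i - b i) ^ 2 = r ⬝ᵥ r - 2 * (b ⬝ᵥ r) + ∑ i, b i ^ 2 := by
    simp only [dotProduct, Finset.mul_sum, ← Finset.sum_sub_distrib, ← Finset.sum_add_distrib]
    exact Finset.sum_congr rfl fun i _ => by ring
  have hlin : (fun i => α * lam - b i) ⬝ᵥ r = α * lam * ∑ i, r i - b ⬝ᵥ r := by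
    simp only [dotProduct, Finset.mul_sum, ← Finset.sum_sub_distrib]
    exact Finset.sum_congr rfl fun i _ => by ring
  simp only [quadObj, penalty, add_mulVec, one_mulVec, smul_mulVec, dotProduct_add,
    dotProduct_smul, smul_eq_mul, hsq, hlin]
  field_simp
  ring

end Penalty

section Phase

noncomputable def phase (w : ℂ) : ℂ := if w ≠ 0 then w / (‖w‖ : ℂ) else 1

theorem norm_phase (w : ℂ) : ‖phase w‖ = 1 := by
  by_cases hw : w = 0 <;> simp [phase, hw]

theorem norm_mul_phase (w : ℂ) : (‖w‖ : ℂ) * phase w = w := by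
  by_cases hw : w = 0
  · simp [phase, hw]
  · simp [phase, hw, mul_div_cancel₀]

theorem norm_ofReal_mul_phase {r : ℝ} (hr : 0 ≤ r) (w : ℂ) : ‖(r : ℂ) * phase w‖ = r := by
  rw [norm_mul, norm_phase, Complex.norm_of_nonneg hr, mul_one]

variable {ι : Type*} [Fintype ι]

theorem norm_toLp_mul_phase_sub_sq (r : ι → ℝ) (z : EuclideanSpace ℂ ι) :
    ‖WithLp.toLp 2 (fun i => (r i : ℂ) * phase (z i)) - z‖ ^ 2 = ∑ i, (r i - ‖z i‖) ^ 2 := by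
  rw [EuclideanSpace.norm_sq_eq]
  refine Finset.sum_congr rfl fun i _ => ?_
  have hi : (r i : ℂ) * phase (z i) - z i = ((r i - ‖z i‖ : ℝ) : ℂ) * phase (z i) := by
    push_cast
    linear_combination norm_mul_phase (z i)
  simp only [PiLp.sub_apply, hi, norm_mul, norm_phase, Complex.norm_real, Real.norm_eq_abs,
    mul_one, sq_abs]

theorem sum_sq_norm_sub_norm_le_norm_sub_sq {𝕜 : Type*} [RCLike 𝕜] (x z : EuclideanSpace 𝕜 ι) :
    ∑ i, (‖x i‖ - ‖z i‖) ^ 2 ≤ ‖x - z‖ ^ 2 := by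
  rw [EuclideanSpace.norm_sq_eq]
  refine Finset.sum_le_sum fun i _ => ?_
  rw [← sq_abs, PiLp.sub_apply]
  gcongr
  exact abs_norm_sub_norm_le _ _

end Phase

theorem stmt12_general (n : ℕ) (W : Matrix (Fin n) (Fin n) ℝ)
    (hsymm : ∀ i j, W i j = W j i)
    (f : EuclideanSpace ℂ (Fin n) → ℝ)
    (gradf : EuclideanSpace ℂ (Fin n) → EuclideanSpace ℂ (Fin n))
    (hdiff : ∀ x, HasGradientAt f (gradf x) x)
    (L : ℝ) (hL : 0 < L)
    (hlip : ∀ x y, ‖gradf x - gradf y‖ ≤ L * ‖x - y‖)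
    (lam : ℝ)
    (α : ℝ) (hα0 : 0 < α) (hα : α ≤ 1 / L)
    (β : ℝ) (hβ : β = α * lam)
    (σ : ℝ) (hσpos : 0 < σ)
    (hσ : σ = ‖Matrix.toEuclideanCLM (𝕜 := ℝ) ((1 : Matrix (Fin n) (Fin n) ℝ) + β • W)‖)
    (η : ℝ) (hη0 : 0 < η) (hη : η ≤ 2 / σ)
    (xk : EuclideanSpace ℂ (Fin n))
    (z : EuclideanSpace ℂ (Fin n)) (hz : z = xk - α • gradf xk)
    (S : (Fin n → ℝ) → (Fin n → ℝ))
    (hS : S = fun x i => max (x i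
        - η * ((((1 : Matrix (Fin n) (Fin n) ℝ) + β • W).mulVec x) i
            + β - ‖z i‖)) 0)
    (u : Fin n → ℂ)
    (hu : ∀ i, u i = if z i ≠ 0 then z i / (‖z i‖ : ℂ) else 1)
    (C : EuclideanSpace ℂ (Fin n) → ℝ)
    (hC : C = fun x => f x + lam * ((∑ i, ‖x i‖)
        + (1 / 2) * ∑ i, ∑ j, W i j * (‖x i‖ * ‖x j‖))) :
    ∀ m : ℕ, 1 ≤ m →
      C (WithLp.toLp 2 (fun i => ((S^[m] (fun i => ‖xk i‖)) i : ℂ) * u i)) ≤ C xk := by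
  intro m _
  subst hβ
  set A : Matrix (Fin n) (Fin n) ℝ := 1 + (α * lam) • W
  set c : Fin n → ℝ := fun i => α * lam - ‖z i‖
  have hS' : S = projGradStep A c η := by
    rw [hS]; funext x i; simp only [projGradStep, c, add_sub_assoc]
  have hu' : u = fun i => phase (z i) := funext hu
  have hC' : ∀ x, C x = f x + lam * penalty W (fun i => ‖x i‖) := by
    intro x; rw [hC, penalty, dotProduct_mulVec_eq_sum_sum]
  have hA : A.IsSymm := isSymm_one.add ((IsSymm.ext fun i j => hsymm j i).smul _)
  have hAη : ‖toEuclideanCLM (𝕜 := ℝ) A‖ * η ≤ 2 := hσ ▸ (le_div_iff₀' hσpos).1 hη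
  have hαL : α * L ≤ 1 := (le_div_iff₀ hL).1 (by simpa using hα)
  obtain ⟨hr, hq⟩ := quadObj_iterate_projGradStep_le hA c hη0 hAη
    (r := fun i => ‖xk i‖) (fun i => norm_nonneg _) m
  rw [hS', hu']
  set r₀ : Fin n → ℝ := fun i => ‖xk i‖
  set r := (projGradStep A c η)^[m] r₀
  have hid := fun r => sum_sq_sub_add_penalty_eq_quadObj W (fun i => ‖z i‖) r hα0.ne' lam
  set K := f xk - α / 2 * ‖gradf xk‖ ^ 2 with hK
  calc C (WithLp.toLp 2 (fun i => (r i : ℂ) * phase (z i)))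
      ≤ K + 1 / (2 * α) * ∑ i, (r i - ‖z i‖) ^ 2 + lam * penalty W r := by
        have hdesc := le_sub_add_norm_sub_gradient_step_sq hdiff hlip hα0 hαL xk
          (WithLp.toLp 2 (fun i => (r i : ℂ) * phase (z i)))
        rw [← hz, norm_toLp_mul_phase_sub_sq, ← hK] at hdesc
        rw [hC']
        simp only [norm_ofReal_mul_phase (hr _)]
        linarith
    _ ≤ K + 1 / (2 * α) * ∑ i, (r₀ i - ‖z i‖) ^ 2 + lam * penalty W r₀ := by
        have := div_le_div_of_nonneg_right hq hα0.le
        linarith [hid r, hid r₀]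
    _ ≤ K + 1 / (2 * α) * ‖xk - z‖ ^ 2 + lam * penalty W r₀ := by
        gcongr; exact sum_sq_norm_sub_norm_le_norm_sub_sq xk z
    _ = C xk := by
        rw [hC', hz, sub_sub_cancel, norm_smul, Real.norm_of_nonneg hα0.le]
        field_simp
        ring

/-- Descent guarantee (Prop. 4(descent part)): with z = x^k − α∇f(x^k), the
iterate S^m(|x^k|) ⊙ u satisfies C(S^m(|x^k|) ⊙ u) ≤ C(x^k) for every m ≥ 1. -/
theorem stmt12 (n : ℕ) (hn : 0 < n) (W : Matrix (Fin n) (Fin n) ℝ)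
    (hsymm : ∀ i j, W i j = W j i) (hnonneg : ∀ i j, 0 ≤ W i j)
    (hdiag : ∀ i, W i i = 0)
    (f : EuclideanSpace ℂ (Fin n) → ℝ)
    (gradf : EuclideanSpace ℂ (Fin n) → EuclideanSpace ℂ (Fin n))
    (hconv : ConvexOn ℝ Set.univ f)
    (hdiff : ∀ x, HasGradientAt f (gradf x) x)
    (L : ℝ) (hL : 0 < L)
    (hlip : ∀ x y, ‖gradf x - gradf y‖ ≤ L * ‖x - y‖)
    (lam : ℝ) (hlam : 0 < lam)
    (α : ℝ) (hα0 : 0 < α) (hα : α ≤ 1 / L)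
    (β : ℝ) (hβ : β = α * lam)
    (hpsd : ((1 : Matrix (Fin n) (Fin n) ℝ) + β • W).PosSemidef)
    (σ : ℝ) (hσpos : 0 < σ)
    (hσ : σ = ‖Matrix.toEuclideanCLM (𝕜 := ℝ) ((1 : Matrix (Fin n) (Fin n) ℝ) + β • W)‖)
    (η : ℝ) (hη0 : 0 < η) (hη : η ≤ 2 / σ)
    (xk : EuclideanSpace ℂ (Fin n))
    (z : EuclideanSpace ℂ (Fin n)) (hz : z = xk - α • gradf xk)
    (S : (Fin n → ℝ) → (Fin n → ℝ))
    (hS : S = fun x i => max (x i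
        - η * ((((1 : Matrix (Fin n) (Fin n) ℝ) + β • W).mulVec x) i
            + β - ‖z i‖)) 0)
    (u : Fin n → ℂ)
    (hu : ∀ i, u i = if z i ≠ 0 then z i / (‖z i‖ : ℂ) else 1)
    (C : EuclideanSpace ℂ (Fin n) → ℝ)
    (hC : C = fun x => f x + lam * ((∑ i, ‖x i‖)
        + (1 / 2) * ∑ i, ∑ j, W i j * (‖x i‖ * ‖x j‖))) :
    ∀ m : ℕ, 1 ≤ m →
      C (WithLp.toLp 2 (fun i => ((S^[m] (fun i => ‖xk i‖)) i : ℂ) * u i)) ≤ C xk :=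
  stmt12_general n W hsymm f gradf hdiff L hL hlip lam α hα0 hα β hβ σ hσpos hσ η hη0 hη xk z hz S
    hS u hu C hC
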